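/- Assume x_0 ∈ range(A^T). The RK-RR iterates converge to the ridge solution x_μ up to a finite horizon: E||x_t - x_μ||^2 ≤ 2[μ^2(1 - κ_dem^{-2})]^t ||x_0 - x_μ||^2 + (2μ/((1+μ)λ)) ||b - A x_μ||^2. -/

import Mathlib

open Matrix Finset
noncomputable section

/-- Squared Euclidean norm of a vector. -/
def vnormSq {k : ℕ} (x : Fin k → ℝ) : ℝ := ∑ i, x i ^ 2

/-- Squared Frobenius norm of a matrix. -/
def frobSq {n d : ℕ} (A : Matrix (Fin n) (Fin d) ℝ) : ℝ := ∑ i, vnormSq (A i)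

/-- Row sampling probability ‖a_i‖²/‖A‖_F² used by randomized Kaczmarz. -/
def rowProb {n d : ℕ} (A : Matrix (Fin n) (Fin d) ℝ) (i : Fin n) : ℝ := vnormSq (A i) / frobSq A

/-- Spectral norm (ℓ²-operator norm) of a matrix. -/
def matSpectralNorm {n d : ℕ} (M : Matrix (Fin n) (Fin d) ℝ) : ℝ :=
  ‖LinearMap.toContinuousLinearMap (Matrix.toEuclideanLin M)‖

/-- The four Penrose conditions characterizing the Moore–Penrose pseudoinverse. -/
def IsMoorePenrose {n d : ℕ} (A : Matrix (Fin n) (Fin d) ℝ) (Ap : Matrix (Fin d) (Fin n) ℝ) : Prop :=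
  A * Ap * A = A ∧ Ap * A * Ap = Ap ∧ (A * Ap)ᵀ = A * Ap ∧ (Ap * A)ᵀ = Ap * A

/-- Demmel condition number κ_dem = ‖A⁺‖ ‖A‖_F. -/
def kdem {n d : ℕ} (A : Matrix (Fin n) (Fin d) ℝ) (Ap : Matrix (Fin d) (Fin n) ℝ) : ℝ :=
  matSpectralNorm Ap * Real.sqrt (frobSq A)

/-- One randomized Kaczmarz update using row i. -/
def rkStep {n d : ℕ} (A : Matrix (Fin n) (Fin d) ℝ) (b : Fin n → ℝ) (i : Fin n) (x : Fin d → ℝ) :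
    Fin d → ℝ := x + ((b i - A i ⬝ᵥ x) / vnormSq (A i)) • A i

/-- Randomized Kaczmarz iterates along a fixed path ω of row indices. -/
def rkSeq {n d : ℕ} (A : Matrix (Fin n) (Fin d) ℝ) (b : Fin n → ℝ) (x0 : Fin d → ℝ)
    (ω : ℕ → Fin n) : ℕ → Fin d → ℝ
  | 0 => x0
  | t + 1 => rkStep A b (ω t) (rkSeq A b x0 ω t)

/-- Extend a finite path of indices to an infinite one. -/
def extendPath {n T : ℕ} [NeZero n] (ω : Fin T → Fin n) : ℕ → Fin n :=
  fun s => if h : s < T then ω ⟨s, h⟩ else 0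

/-- Probability of a finite path of i.i.d. row indices. -/
def pathWeight {n d T : ℕ} (A : Matrix (Fin n) (Fin d) ℝ) (ω : Fin T → Fin n) : ℝ :=
  ∏ t, rowProb A (ω t)

/-- The expected one-step Kaczmarz contraction matrix I - AᵀA/‖A‖_F². -/
def kacMat {n d : ℕ} (A : Matrix (Fin n) (Fin d) ℝ) : Matrix (Fin d) (Fin d) ℝ :=
  1 - (frobSq A)⁻¹ • (Aᵀ * A)

/-- x lies in the row space range(Aᵀ). -/
def inRowSpace {n d : ℕ} (A : Matrix (Fin n) (Fin d) ℝ) (x : Fin d → ℝ) : Prop :=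
  ∃ u : Fin n → ℝ, x = Aᵀ *ᵥ u

/-- RK-RR iterates: Kaczmarz step followed by weight decay by μ. -/
def rrSeq {n d : ℕ} (A : Matrix (Fin n) (Fin d) ℝ) (b : Fin n → ℝ) (μ : ℝ) (x0 : Fin d → ℝ)
    (ω : ℕ → Fin n) : ℕ → Fin d → ℝ
  | 0 => x0
  | t + 1 => μ • rkStep A b (ω t) (rrSeq A b μ x0 ω t)

/-- Orthogonal projection step (I - a aᵀ/‖a‖²) x for row a = A i. -/
def projStep {n d : ℕ} (A : Matrix (Fin n) (Fin d) ℝ) (i : Fin n) (x : Fin d → ℝ) : Fin d → ℝ :=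
  x - ((A i ⬝ᵥ x) / vnormSq (A i)) • A i

/-- RK-RR bias sequence m_{t+1} = μ (I - a aᵀ/‖a‖²) m_t. -/
def biasSeq {n d : ℕ} (A : Matrix (Fin n) (Fin d) ℝ) (μ : ℝ) (m0 : Fin d → ℝ)
    (ω : ℕ → Fin n) : ℕ → Fin d → ℝ
  | 0 => m0
  | t + 1 => μ • projStep A (ω t) (biasSeq A μ m0 ω t)

/-- RK-RR variance sequence v_{t+1} = μ(I - aaᵀ/‖a‖²)v_t + μ (b_i - aᵀx_μ)a/‖a‖² - (1-μ)x_μ. -/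
def varSeq {n d : ℕ} (A : Matrix (Fin n) (Fin d) ℝ) (b : Fin n → ℝ) (μ : ℝ) (xmu : Fin d → ℝ)
    (ω : ℕ → Fin n) : ℕ → Fin d → ℝ
  | 0 => 0
  | t + 1 => μ • projStep A (ω t) (varSeq A b μ xmu ω t)
      + (μ * ((b (ω t) - A (ω t) ⬝ᵥ xmu) / vnormSq (A (ω t)))) • A (ω t)
      - (1 - μ) • xmu

/-- Covariance matrix Σ = I_m + v 1_m 1_mᵀ. -/
def covM (m : ℕ) (v : ℝ) : Matrix (Fin m) (Fin m) ℝ := 1 + v • Matrix.of fun _ _ => 1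

/-- Block Σ_{S,T} of the covariance matrix Σ = I + v 1 1ᵀ. -/
def subBlock {m : ℕ} (v : ℝ) (S T : Finset (Fin m)) : Matrix ↥S ↥T ℝ :=
  (covM m v).submatrix (fun i => i.1) (fun j => j.1)

/-- A deterministic adaptive algorithm that accesses at most t entries of b
(given full access to A) and outputs an estimate of the least-squares solution. -/
structure RowAccessAlg (d t : ℕ) where
  query : (n : ℕ) → Matrix (Fin n) (Fin d) ℝ → (j : Fin t) → (Fin (j : ℕ) → ℝ) → Fin n
  output : (n : ℕ) → Matrix (Fin n) (Fin d) ℝ → (Fin t → ℝ) → Fin d → ℝ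

/-- The successive answers to the algorithm's adaptive queries. -/
def RowAccessAlg.answers {d t : ℕ} (alg : RowAccessAlg d t) (n : ℕ)
    (A : Matrix (Fin n) (Fin d) ℝ) (b : Fin n → ℝ) : (j : ℕ) → j < t → ℝ
  | j, h => b (alg.query n A ⟨j, h⟩ fun i => alg.answers n A b i (i.isLt.trans h))
  termination_by j _ => j

/-- The algorithm's output estimate on the problem (A, b). -/
def RowAccessAlg.run {d t : ℕ} (alg : RowAccessAlg d t) (n : ℕ)
    (A : Matrix (Fin n) (Fin d) ℝ) (b : Fin n → ℝ) : Fin d → ℝ :=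
  alg.output n A fun j => alg.answers n A b j j.isLt

/-!
Write `xₜ - x_μ = mₜ + vₜ`, where the bias `mₜ` starts at `x₀ - x_μ` and only sees the
projections `μ (I - aaᵀ/‖a‖²)`, and the variance `vₜ` starts at `0`. Both are iterates of a
random map that depends on the current row only, so their moments obey one-step recursions.

The bias never leaves `range Aᵀ`, where `‖x‖ ≤ ‖A⁺‖ ‖Ax‖`; hence the averaged projection
`I - AᵀA/‖A‖_F²` contracts `‖m‖²` by the factor `1 - κ_dem⁻²`, and
`E‖mₜ‖² ≤ [μ²(1 - κ_dem⁻²)]ᵗ ‖m₀‖²`.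

By the ridge equation the averaged variance step is the linear map `μ (I - AᵀA/‖A‖_F²)`, so
`E vₜ = 0` for all `t`. The cross term in `E‖vₜ₊₁‖²` therefore vanishes and
`E‖vₜ₊₁‖² ≤ μ² E‖vₜ‖² + μ² ‖b - A x_μ‖²/‖A‖_F²`, whose fixed point is `μ ‖b - A x_μ‖²/((1 + μ) λ)`.
The theorem follows from `‖m + v‖² ≤ 2‖m‖² + 2‖v‖²`.
-/

section VectorNorm

variable {k : ℕ}

lemma vnormSq_eq_dotProduct (x : Fin k → ℝ) : vnormSq x = x ⬝ᵥ x := by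
  simp [vnormSq, dotProduct, sq]

lemma vnormSq_nonneg (x : Fin k → ℝ) : 0 ≤ vnormSq x :=
  sum_nonneg fun _ _ => sq_nonneg _

lemma vnormSq_pos {x : Fin k → ℝ} (hx : x ≠ 0) : 0 < vnormSq x :=
  (vnormSq_nonneg x).lt_of_ne <| by
    rwa [ne_comm, vnormSq_eq_dotProduct, Ne, dotProduct_self_eq_zero]

lemma vnormSq_smul (c : ℝ) (x : Fin k → ℝ) : vnormSq (c • x) = c ^ 2 * vnormSq x := by
  simp only [vnormSq_eq_dotProduct, dotProduct_smul, smul_dotProduct, smul_eq_mul]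
  ring

lemma vnormSq_add (x y : Fin k → ℝ) :
    vnormSq (x + y) = vnormSq x + 2 * (x ⬝ᵥ y) + vnormSq y := by
  simp only [vnormSq_eq_dotProduct, add_dotProduct, dotProduct_add, dotProduct_comm y x]
  ring

lemma vnormSq_sub (x y : Fin k → ℝ) :
    vnormSq (x - y) = vnormSq x - 2 * (x ⬝ᵥ y) + vnormSq y := by
  simp only [vnormSq_eq_dotProduct, sub_dotProduct, dotProduct_sub, dotProduct_comm y x]
  ring

lemma vnormSq_add_le (x y : Fin k → ℝ) : vnormSq (x + y) ≤ 2 * vnormSq x + 2 * vnormSq y := by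
  rw [vnormSq_add]
  linarith [vnormSq_sub x y, vnormSq_nonneg (x - y)]

lemma sum_mul_vnormSq_sub_mean_le {ι : Type*} [Fintype ι] (p : ι → ℝ) (hp : ∑ i, p i = 1)
    (y : ι → Fin k → ℝ) :
    ∑ i, p i * vnormSq (y i - ∑ j, p j • y j) ≤ ∑ i, p i * vnormSq (y i) := by
  set m := ∑ j, p j • y j
  have hm : ∑ i, p i * (y i ⬝ᵥ m) = m ⬝ᵥ m := by
    simp only [m, sum_dotProduct, smul_dotProduct, smul_eq_mul]
  simp only [vnormSq_sub, mul_add, mul_sub, mul_left_comm _ (2 : ℝ), sum_add_distrib,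
    sum_sub_distrib, ← mul_sum, ← sum_mul, hm, hp, vnormSq_eq_dotProduct m]
  linarith [vnormSq_nonneg m, vnormSq_eq_dotProduct m]

end VectorNorm

section RowSampling

variable {n d : ℕ} (A : Matrix (Fin n) (Fin d) ℝ)

lemma frobSq_nonneg : 0 ≤ frobSq A :=
  sum_nonneg fun _ _ => vnormSq_nonneg _

lemma frobSq_pos [NeZero n] (hrows : ∀ i, A i ≠ 0) : 0 < frobSq A :=
  sum_pos' (fun i _ => vnormSq_nonneg (A i)) ⟨0, mem_univ _, vnormSq_pos (hrows 0)⟩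

lemma rowProb_nonneg (i : Fin n) : 0 ≤ rowProb A i :=
  div_nonneg (vnormSq_nonneg _) (frobSq_nonneg A)

lemma sum_rowProb [NeZero n] (hrows : ∀ i, A i ≠ 0) : ∑ i, rowProb A i = 1 := by
  simp only [rowProb, ← sum_div]
  exact div_self (frobSq_pos A hrows).ne'

end RowSampling

section PathExpectation

variable {n d : ℕ} (A : Matrix (Fin n) (Fin d) ℝ) {M N : Type*} [AddCommGroup M] [Module ℝ M]
  [AddCommGroup N] [Module ℝ N]

def pathExpect {T : ℕ} (f : (Fin T → Fin n) → M) : M :=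
  ∑ ω, pathWeight A ω • f ω

lemma pathExpect_zero (f : (Fin 0 → Fin n) → M) : pathExpect A f = f Fin.elim0 := by
  simp [pathExpect, pathWeight, Subsingleton.elim _ (Fin.elim0 : Fin 0 → Fin n)]

lemma pathExpect_succ {T : ℕ} (f : (Fin (T + 1) → Fin n) → M) :
    pathExpect A f = pathExpect A fun ω => ∑ i, rowProb A i • f (Fin.snoc ω i) := by
  simp only [pathExpect, smul_sum, smul_smul]
  rw [← (Fin.snocEquiv fun _ => Fin n).sum_comp, Fintype.sum_prod_type, sum_comm]
  refine sum_congr rfl fun ω _ => sum_congr rfl fun i _ => ?_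
  simp [Fin.snocEquiv, pathWeight, Fin.prod_univ_castSucc]

lemma pathExpect_const [NeZero n] (hrows : ∀ i, A i ≠ 0) {T : ℕ} (c : M) :
    pathExpect A (fun _ : Fin T → Fin n => c) = c := by
  simp only [pathExpect, ← sum_smul, pathWeight, ← Fintype.prod_sum, sum_rowProb A hrows,
    prod_const_one, one_smul]

lemma pathExpect_add {T : ℕ} (f g : (Fin T → Fin n) → M) :
    pathExpect A (fun ω => f ω + g ω) = pathExpect A f + pathExpect A g := by
  simp only [pathExpect, smul_add, sum_add_distrib]

lemma pathExpect_mul_left {T : ℕ} (c : ℝ) (f : (Fin T → Fin n) → ℝ) :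
    pathExpect A (fun ω => c * f ω) = c * pathExpect A f := by
  simp only [pathExpect, mul_sum, smul_eq_mul, mul_left_comm]

lemma map_pathExpect (L : M →ₗ[ℝ] N) {T : ℕ} (f : (Fin T → Fin n) → M) :
    L (pathExpect A f) = pathExpect A fun ω => L (f ω) := by
  simp only [pathExpect, map_sum, map_smul]

lemma pathExpect_mono {T : ℕ} {f g : (Fin T → Fin n) → ℝ} (h : ∀ ω, f ω ≤ g ω) :
    pathExpect A f ≤ pathExpect A g :=
  sum_le_sum fun ω _ => smul_le_smul_of_nonneg_left (h ω) <|
    prod_nonneg fun _ _ => rowProb_nonneg A _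

end PathExpectation

section PathIteration

variable {n : ℕ} {V : Type*} (F : Fin n → V → V) (x0 : V)

def pathIter (ω : ℕ → Fin n) : ℕ → V
  | 0 => x0
  | t + 1 => F (ω t) (pathIter ω t)

lemma pathIter_congr {ω ω' : ℕ → Fin n} :
    ∀ {t : ℕ}, (∀ s < t, ω s = ω' s) → pathIter F x0 ω t = pathIter F x0 ω' t
  | 0, _ => rfl
  | t + 1, h => by
    rw [pathIter, pathIter, h t t.lt_succ_self,
      pathIter_congr fun s hs => h s (hs.trans t.lt_succ_self)]

lemma pathIter_extendPath_snoc [NeZero n] {T : ℕ} (ω : Fin T → Fin n) (i : Fin n) :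
    pathIter F x0 (extendPath (Fin.snoc ω i)) (T + 1) = F i (pathIter F x0 (extendPath ω) T) := by
  have hlast : extendPath (Fin.snoc ω i) T = i := by
    simp only [extendPath, dif_pos T.lt_succ_self]
    exact Fin.snoc_last (α := fun _ => Fin n) i ω
  have hinit : ∀ s < T, extendPath (Fin.snoc ω i) s = extendPath ω s := by
    intro s hs
    simp [extendPath, hs, hs.trans T.lt_succ_self, Fin.snoc]
  rw [pathIter, hlast, pathIter_congr F x0 hinit]

lemma pathIter_mem {S : Set V} (hS : ∀ i, Set.MapsTo (F i) S S) (hx0 : x0 ∈ S)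
    (ω : ℕ → Fin n) : ∀ t, pathIter F x0 ω t ∈ S
  | 0 => hx0
  | t + 1 => hS _ (pathIter_mem hS hx0 ω t)

end PathIteration

section IterationExpectation

variable {n d : ℕ} [NeZero n] (A : Matrix (Fin n) (Fin d) ℝ) {V : Type*} (F : Fin n → V → V)
  (x0 : V)

lemma pathExpect_pathIter_succ {M : Type*} [AddCommGroup M] [Module ℝ M] (g : V → M) (T : ℕ) :
    pathExpect A (fun ω : Fin (T + 1) → Fin n => g (pathIter F x0 (extendPath ω) (T + 1)))
      = pathExpect A fun ω : Fin T → Fin n =>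
          ∑ i, rowProb A i • g (F i (pathIter F x0 (extendPath ω) T)) := by
  simp only [pathExpect_succ A, pathIter_extendPath_snoc]

lemma pathExpect_pathIter_eq_pow [AddCommGroup V] [Module ℝ V] (L : V →ₗ[ℝ] V)
    (hL : ∀ x, ∑ i, rowProb A i • F i x = L x) (T : ℕ) :
    pathExpect A (fun ω : Fin T → Fin n => pathIter F x0 (extendPath ω) T) = (L ^ T) x0 := by
  induction T with
  | zero => simp [pathExpect_zero, pathIter]
  | succ T ih =>
    refine (pathExpect_pathIter_succ A F x0 id T).trans ?_
    simp only [id, hL, ← map_pathExpect, ih, pow_succ', Module.End.mul_apply]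

lemma pathExpect_pathIter_le_geom (g : V → ℝ) {S : Set V} (hS : ∀ i, Set.MapsTo (F i) S S)
    (hx0 : x0 ∈ S) {ρ : ℝ} (hρ : 0 ≤ ρ)
    (hstep : ∀ x ∈ S, ∑ i, rowProb A i * g (F i x) ≤ ρ * g x) (T : ℕ) :
    pathExpect A (fun ω : Fin T → Fin n => g (pathIter F x0 (extendPath ω) T)) ≤ ρ ^ T * g x0 := by
  induction T with
  | zero => simp [pathExpect_zero, pathIter]
  | succ T ih =>
    rw [pathExpect_pathIter_succ A F x0 g]
    calc _ ≤ pathExpect A fun ω : Fin T → Fin n => ρ * g (pathIter F x0 (extendPath ω) T) :=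
          pathExpect_mono A fun ω => hstep _ (pathIter_mem F x0 hS hx0 _ T)
      _ ≤ ρ ^ (T + 1) * g x0 := by
          rw [pathExpect_mul_left, pow_succ', mul_assoc]
          exact mul_le_mul_of_nonneg_left ih hρ

-- The linear term `ℓ` drops out of the recursion for `E g(xₜ)` because the iterate has mean zero.
lemma pathExpect_pathIter_le_of_mean_zero [AddCommGroup V] [Module ℝ V] (hrows : ∀ i, A i ≠ 0)
    (g : V → ℝ) (ℓ : V →ₗ[ℝ] ℝ) {ρ c B : ℝ} (hρ : 0 ≤ ρ) (hx0 : g x0 ≤ B) (hB : ρ * B + c ≤ B)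
    (hstep : ∀ x, ∑ i, rowProb A i * g (F i x) ≤ ρ * g x + c + ℓ x)
    (hmean : ∀ T, pathExpect A (fun ω : Fin T → Fin n => pathIter F x0 (extendPath ω) T) = 0)
    (T : ℕ) :
    pathExpect A (fun ω : Fin T → Fin n => g (pathIter F x0 (extendPath ω) T)) ≤ B := by
  induction T with
  | zero => simpa [pathExpect_zero, pathIter] using hx0
  | succ T ih =>
    rw [pathExpect_pathIter_succ A F x0 g]
    calc _ ≤ pathExpect A fun ω : Fin T → Fin n => ρ * g (pathIter F x0 (extendPath ω) T) + c
            + ℓ (pathIter F x0 (extendPath ω) T) :=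
          pathExpect_mono A fun ω => hstep _
      _ = ρ * pathExpect A (fun ω : Fin T → Fin n => g (pathIter F x0 (extendPath ω) T)) + c := by
          rw [pathExpect_add, pathExpect_add, pathExpect_mul_left, pathExpect_const A hrows,
            ← map_pathExpect, hmean, map_zero, add_zero]
      _ ≤ B := by nlinarith

end IterationExpectation

section MatrixBounds

variable {n d : ℕ}

open scoped Matrix.Norms.L2Operator in
lemma vnormSq_mulVec_le_matSpectralNorm {k l : ℕ} (M : Matrix (Fin k) (Fin l) ℝ)
    (y : Fin l → ℝ) : vnormSq (M *ᵥ y) ≤ matSpectralNorm M ^ 2 * vnormSq y := by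
  have hnorm : ∀ {m : ℕ} (z : Fin m → ℝ), ‖WithLp.toLp 2 z‖ ^ 2 = vnormSq z := fun z => by
    simp [EuclideanSpace.real_norm_sq_eq, vnormSq]
  have hM : matSpectralNorm M = ‖M‖ := (Matrix.l2_opNorm_def M).symm
  have h := pow_le_pow_left₀ (norm_nonneg _) (Matrix.l2_opNorm_mulVec M (WithLp.toLp 2 y)) 2
  rw [mul_pow, ← hM, hnorm, hnorm] at h
  exact h

lemma vnormSq_mulVec_le_frobSq (A : Matrix (Fin n) (Fin d) ℝ) (x : Fin d → ℝ) :
    vnormSq (A *ᵥ x) ≤ frobSq A * vnormSq x := by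
  rw [frobSq, sum_mul]
  refine sum_le_sum fun i _ => ?_
  simpa [mulVec, dotProduct, vnormSq] using sum_mul_sq_le_sq_mul_sq univ (A i) x

lemma inRowSpace_iff_mem_range (A : Matrix (Fin n) (Fin d) ℝ) (x : Fin d → ℝ) :
    inRowSpace A x ↔ x ∈ LinearMap.range Aᵀ.mulVecLin := by
  rw [LinearMap.mem_range]
  exact ⟨fun ⟨u, hu⟩ => ⟨u, hu.symm⟩, fun ⟨u, hu⟩ => ⟨u, hu.symm⟩⟩

lemma inRowSpace_sub {A : Matrix (Fin n) (Fin d) ℝ} {x y : Fin d → ℝ} (hx : inRowSpace A x)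
    (hy : inRowSpace A y) : inRowSpace A (x - y) := by
  obtain ⟨u, rfl⟩ := hx
  obtain ⟨v, rfl⟩ := hy
  exact ⟨u - v, by rw [mulVec_sub]⟩

lemma row_mem_range (A : Matrix (Fin n) (Fin d) ℝ) (i : Fin n) :
    A i ∈ LinearMap.range Aᵀ.mulVecLin :=
  ⟨Pi.single i 1, by rw [mulVecLin_apply, mulVec_single_one]; rfl⟩

-- `A⁺ A` fixes the row space, since `A⁺ A Aᵀ = (A A⁺ A)ᵀ = Aᵀ`.
lemma vnormSq_le_of_inRowSpace {A : Matrix (Fin n) (Fin d) ℝ} {Ap : Matrix (Fin d) (Fin n) ℝ}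
    (hAp : IsMoorePenrose A Ap) {x : Fin d → ℝ} (hx : inRowSpace A x) :
    vnormSq x ≤ matSpectralNorm Ap ^ 2 * vnormSq (A *ᵥ x) := by
  obtain ⟨u, rfl⟩ := hx
  have hproj : Ap * A * Aᵀ = Aᵀ := by
    rw [← hAp.2.2.2, ← transpose_mul, ← Matrix.mul_assoc, hAp.1]
  calc vnormSq (Aᵀ *ᵥ u) = vnormSq (Ap *ᵥ (A *ᵥ (Aᵀ *ᵥ u))) := by
        rw [mulVec_mulVec, mulVec_mulVec, hproj]
    _ ≤ _ := vnormSq_mulVec_le_matSpectralNorm _ _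

lemma kdem_sq (A : Matrix (Fin n) (Fin d) ℝ) (Ap : Matrix (Fin d) (Fin n) ℝ) :
    kdem A Ap ^ 2 = matSpectralNorm Ap ^ 2 * frobSq A := by
  rw [kdem, mul_pow, Real.sq_sqrt (frobSq_nonneg A)]

lemma one_le_kdem_sq {A : Matrix (Fin n) (Fin d) ℝ} {Ap : Matrix (Fin d) (Fin n) ℝ}
    (hAp : IsMoorePenrose A Ap) {i : Fin n} (hi : A i ≠ 0) : 1 ≤ kdem A Ap ^ 2 := by
  have hpos := vnormSq_pos hi
  have h1 := vnormSq_le_of_inRowSpace hAp ((inRowSpace_iff_mem_range A _).2 (row_mem_range A i))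
  have h2 := vnormSq_mulVec_le_frobSq A (A i)
  rw [kdem_sq]
  nlinarith [sq_nonneg (matSpectralNorm Ap)]

end MatrixBounds

section KaczmarzProjection

variable {n d : ℕ} (A : Matrix (Fin n) (Fin d) ℝ)

lemma row_dotProduct_projStep {i : Fin n} (hi : A i ≠ 0) (x : Fin d → ℝ) :
    A i ⬝ᵥ projStep A i x = 0 := by
  have h := (vnormSq_pos hi).ne'
  rw [projStep, dotProduct_sub, dotProduct_smul, smul_eq_mul, ← vnormSq_eq_dotProduct,
    div_mul_cancel₀ _ h, sub_self]

lemma vnormSq_projStep {i : Fin n} (hi : A i ≠ 0) (x : Fin d → ℝ) :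
    vnormSq (projStep A i x) = x ⬝ᵥ projStep A i x := by
  have horth : projStep A i x ⬝ᵥ A i = 0 := by
    rw [dotProduct_comm]; exact row_dotProduct_projStep A hi x
  rw [vnormSq_eq_dotProduct]
  nth_rw 2 [projStep]
  rw [dotProduct_sub, dotProduct_smul, horth, smul_zero, sub_zero, dotProduct_comm]

lemma sum_rowProb_smul_row (hrows : ∀ i, A i ≠ 0) (c : Fin n → ℝ) :
    ∑ i, rowProb A i • ((c i / vnormSq (A i)) • A i) = (frobSq A)⁻¹ • (Aᵀ *ᵥ c) := by
  have hterm : ∀ i, rowProb A i • ((c i / vnormSq (A i)) • A i) = (frobSq A)⁻¹ • (c i • A i) := by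
    intro i
    have := (vnormSq_pos (hrows i)).ne'
    rw [smul_smul, smul_smul, rowProb]
    congr 1
    field_simp
  rw [sum_congr rfl fun i _ => hterm i, ← smul_sum]
  congr 1
  ext j
  simp [mulVec, dotProduct, mul_comm]

lemma kacMat_mulVec (x : Fin d → ℝ) :
    kacMat A *ᵥ x = x - (frobSq A)⁻¹ • (Aᵀ *ᵥ (A *ᵥ x)) := by
  rw [kacMat, sub_mulVec, one_mulVec, smul_mulVec, mulVec_mulVec]

lemma sum_rowProb_smul_projStep [NeZero n] (hrows : ∀ i, A i ≠ 0) (x : Fin d → ℝ) :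
    ∑ i, rowProb A i • projStep A i x = kacMat A *ᵥ x := by
  simp only [projStep, smul_sub, sum_sub_distrib, ← sum_smul, sum_rowProb A hrows, one_smul]
  rw [kacMat_mulVec, ← sum_rowProb_smul_row A hrows (A *ᵥ x)]
  rfl

lemma dotProduct_kacMat_mulVec (x : Fin d → ℝ) :
    x ⬝ᵥ kacMat A *ᵥ x = vnormSq x - vnormSq (A *ᵥ x) / frobSq A := by
  rw [kacMat_mulVec, dotProduct_sub, dotProduct_smul, dotProduct_mulVec, vecMul_transpose,
    vnormSq_eq_dotProduct, vnormSq_eq_dotProduct, smul_eq_mul, inv_mul_eq_div]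

lemma sum_rowProb_mul_vnormSq_projStep [NeZero n] (hrows : ∀ i, A i ≠ 0) (x : Fin d → ℝ) :
    ∑ i, rowProb A i * vnormSq (projStep A i x) = x ⬝ᵥ kacMat A *ᵥ x := by
  simp only [vnormSq_projStep A (hrows _), ← sum_rowProb_smul_projStep A hrows, dotProduct_sum,
    dotProduct_smul, smul_eq_mul]

end KaczmarzProjection

section BiasVarianceDecomposition

variable {n d : ℕ} (A : Matrix (Fin n) (Fin d) ℝ) (b : Fin n → ℝ) (μ : ℝ)

def varStep (xmu : Fin d → ℝ) (i : Fin n) (v : Fin d → ℝ) : Fin d → ℝ :=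
  μ • projStep A i v + (μ * ((b i - A i ⬝ᵥ xmu) / vnormSq (A i))) • A i - (1 - μ) • xmu

lemma biasSeq_eq_pathIter (m0 : Fin d → ℝ) (ω : ℕ → Fin n) :
    biasSeq A μ m0 ω = pathIter (fun i x => μ • projStep A i x) m0 ω := by
  funext t
  induction t with
  | zero => rfl
  | succ t ih => simp only [biasSeq, pathIter, ih]

lemma varSeq_eq_pathIter (xmu : Fin d → ℝ) (ω : ℕ → Fin n) :
    varSeq A b μ xmu ω = pathIter (varStep A b μ xmu) 0 ω := by
  funext t
  induction t with
  | zero => rfl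
  | succ t ih => simp only [varSeq, pathIter, ih, varStep]

lemma rrSeq_sub_eq_biasSeq_add_varSeq (xmu x0 : Fin d → ℝ) (ω : ℕ → Fin n) :
    ∀ t, rrSeq A b μ x0 ω t - xmu = biasSeq A μ (x0 - xmu) ω t + varSeq A b μ xmu ω t
  | 0 => by simp [rrSeq, biasSeq, varSeq]
  | t + 1 => by
    have hx : rrSeq A b μ x0 ω t = xmu + (biasSeq A μ (x0 - xmu) ω t + varSeq A b μ xmu ω t) := by
      rw [← rrSeq_sub_eq_biasSeq_add_varSeq xmu x0 ω t]
      abel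
    funext j
    simp only [rrSeq, rkStep, biasSeq, varSeq, projStep, hx, Pi.add_apply, Pi.sub_apply,
      Pi.smul_apply, smul_eq_mul, dotProduct_add, add_div, sub_div]
    ring

end BiasVarianceDecomposition

section Bias

variable {n d : ℕ} [NeZero n] {A : Matrix (Fin n) (Fin d) ℝ} {Ap : Matrix (Fin d) (Fin n) ℝ}

lemma sum_rowProb_mul_vnormSq_smul_projStep_le (hrows : ∀ i, A i ≠ 0)
    (hAp : IsMoorePenrose A Ap) (μ : ℝ) {x : Fin d → ℝ} (hx : inRowSpace A x) :
    ∑ i, rowProb A i * vnormSq (μ • projStep A i x)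
      ≤ μ ^ 2 * (1 - (kdem A Ap ^ 2)⁻¹) * vnormSq x := by
  have hF := frobSq_pos A hrows
  have hκ : 0 < kdem A Ap ^ 2 := one_pos.trans_le (one_le_kdem_sq hAp (hrows 0))
  have hdecay : (kdem A Ap ^ 2)⁻¹ * vnormSq x ≤ vnormSq (A *ᵥ x) / frobSq A := by
    rw [inv_mul_le_iff₀ hκ, kdem_sq, mul_assoc, mul_div_cancel₀ _ hF.ne']
    exact vnormSq_le_of_inRowSpace hAp hx
  simp only [vnormSq_smul, mul_left_comm _ (μ ^ 2), ← mul_sum,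
    sum_rowProb_mul_vnormSq_projStep A hrows, dotProduct_kacMat_mulVec]
  nlinarith [sq_nonneg μ]

lemma pathExpect_vnormSq_biasSeq_le (hrows : ∀ i, A i ≠ 0) (hAp : IsMoorePenrose A Ap)
    (μ : ℝ) {m0 : Fin d → ℝ} (h0 : inRowSpace A m0) (T : ℕ) :
    pathExpect A (fun ω : Fin T → Fin n => vnormSq (biasSeq A μ m0 (extendPath ω) T))
      ≤ (μ ^ 2 * (1 - (kdem A Ap ^ 2)⁻¹)) ^ T * vnormSq m0 := by
  simp only [biasSeq_eq_pathIter]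
  refine pathExpect_pathIter_le_geom A _ m0 vnormSq (S := LinearMap.range Aᵀ.mulVecLin)
    ?_ ((inRowSpace_iff_mem_range A m0).1 h0) ?_ ?_ T
  · exact fun i x hx =>
      Submodule.smul_mem _ μ (Submodule.sub_mem _ hx (Submodule.smul_mem _ _ (row_mem_range A i)))
  · exact mul_nonneg (sq_nonneg μ)
      (sub_nonneg.2 (inv_le_one_of_one_le₀ (one_le_kdem_sq hAp (hrows 0))))
  · exact fun x hx =>
      sum_rowProb_mul_vnormSq_smul_projStep_le hrows hAp μ ((inRowSpace_iff_mem_range A x).2 hx)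

end Bias

lemma inRowSpace_of_ridge {n d : ℕ} {A : Matrix (Fin n) (Fin d) ℝ} (b : Fin n → ℝ) {lam : ℝ}
    {xmu : Fin d → ℝ} (hlam0 : lam ≠ 0) (hxmu : Aᵀ *ᵥ (b - A *ᵥ xmu) = lam • xmu) :
    inRowSpace A xmu :=
  ⟨lam⁻¹ • (b - A *ᵥ xmu), by rw [mulVec_smul, hxmu, smul_smul, inv_mul_cancel₀ hlam0, one_smul]⟩

section Variance

variable {n d : ℕ} {A : Matrix (Fin n) (Fin d) ℝ} (b : Fin n → ℝ) {μ lam : ℝ}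
  {xmu : Fin d → ℝ}

-- This is where the ridge equation enters: the noise in the RK-RR step has mean `(1 - μ) x_μ`.
lemma sum_rowProb_smul_residual [NeZero n] (hrows : ∀ i, A i ≠ 0) (hμ : μ ≠ 0)
    (hlam : lam = (1 - μ) / μ * frobSq A) (hxmu : Aᵀ *ᵥ (b - A *ᵥ xmu) = lam • xmu) :
    ∑ i, rowProb A i • ((μ * ((b i - A i ⬝ᵥ xmu) / vnormSq (A i))) • A i) = (1 - μ) • xmu := by
  have hF := (frobSq_pos A hrows).ne'
  simp only [mul_smul, smul_comm (rowProb A _) μ, ← smul_sum]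
  rw [show ∑ i, rowProb A i • ((b i - A i ⬝ᵥ xmu) / vnormSq (A i)) • A i
      = (frobSq A)⁻¹ • (Aᵀ *ᵥ (b - A *ᵥ xmu)) from sum_rowProb_smul_row A hrows _,
    hxmu, hlam, smul_smul, smul_smul]
  congr 1
  field_simp

lemma sum_rowProb_smul_varStep [NeZero n] (hrows : ∀ i, A i ≠ 0) (hμ : μ ≠ 0)
    (hlam : lam = (1 - μ) / μ * frobSq A) (hxmu : Aᵀ *ᵥ (b - A *ᵥ xmu) = lam • xmu)
    (v : Fin d → ℝ) :
    ∑ i, rowProb A i • varStep A b μ xmu i v = μ • kacMat A *ᵥ v := by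
  simp only [varStep, smul_sub, smul_add, sum_sub_distrib, sum_add_distrib,
    sum_rowProb_smul_residual b hrows hμ hlam hxmu, ← sum_smul, sum_rowProb A hrows, one_smul,
    smul_comm (rowProb A _) μ, ← smul_sum, sum_rowProb_smul_projStep A hrows, add_sub_cancel_right]

lemma vnormSq_varStep {i : Fin n} (hi : A i ≠ 0) (v : Fin d → ℝ) :
    vnormSq (varStep A b μ xmu i v)
      = μ ^ 2 * vnormSq (projStep A i v) - 2 * μ * ((1 - μ) • xmu ⬝ᵥ projStep A i v)
        + vnormSq ((μ * ((b i - A i ⬝ᵥ xmu) / vnormSq (A i))) • A i - (1 - μ) • xmu) := by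
  have horth : projStep A i v ⬝ᵥ A i = 0 := by
    rw [dotProduct_comm]; exact row_dotProduct_projStep A hi v
  rw [varStep, add_sub_assoc, vnormSq_add, vnormSq_smul, smul_dotProduct, dotProduct_sub,
    dotProduct_smul, horth, smul_zero, dotProduct_comm _ ((1 - μ) • xmu), smul_eq_mul]
  ring

lemma sum_rowProb_mul_vnormSq_smul_row (hrows : ∀ i, A i ≠ 0) :
    ∑ i, rowProb A i * vnormSq ((μ * ((b i - A i ⬝ᵥ xmu) / vnormSq (A i))) • A i)
      = μ ^ 2 * vnormSq (b - A *ᵥ xmu) / frobSq A := by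
  have hterm : ∀ i, rowProb A i * vnormSq ((μ * ((b i - A i ⬝ᵥ xmu) / vnormSq (A i))) • A i)
      = μ ^ 2 * (b - A *ᵥ xmu) i ^ 2 / frobSq A := by
    intro i
    have := (vnormSq_pos (hrows i)).ne'
    simp only [vnormSq_smul, rowProb, Pi.sub_apply]
    field_simp
    rfl
  rw [sum_congr rfl fun i _ => hterm i, ← sum_div, ← mul_sum]
  rfl

-- The noise in the step has mean `(1 - μ) x_μ`, so its variance is at most its second moment.
lemma sum_rowProb_mul_vnormSq_varStep_le [NeZero n] (hrows : ∀ i, A i ≠ 0) (hμ : μ ≠ 0)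
    (hlam : lam = (1 - μ) / μ * frobSq A) (hxmu : Aᵀ *ᵥ (b - A *ᵥ xmu) = lam • xmu)
    (v : Fin d → ℝ) :
    ∑ i, rowProb A i * vnormSq (varStep A b μ xmu i v)
      ≤ μ ^ 2 * vnormSq v + μ ^ 2 * vnormSq (b - A *ᵥ xmu) / frobSq A
        - 2 * μ * ((1 - μ) • xmu ⬝ᵥ kacMat A *ᵥ v) := by
  have hnoise := sum_mul_vnormSq_sub_mean_le (rowProb A) (sum_rowProb A hrows)
    fun i => (μ * ((b i - A i ⬝ᵥ xmu) / vnormSq (A i))) • A i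
  rw [sum_rowProb_smul_residual b hrows hμ hlam hxmu, sum_rowProb_mul_vnormSq_smul_row b hrows]
    at hnoise
  have hK : v ⬝ᵥ kacMat A *ᵥ v ≤ vnormSq v := by
    rw [dotProduct_kacMat_mulVec]
    linarith [div_nonneg (vnormSq_nonneg (A *ᵥ v)) (frobSq_nonneg A)]
  have hcross : ∑ i, rowProb A i * ((1 - μ) • xmu ⬝ᵥ projStep A i v)
      = (1 - μ) • xmu ⬝ᵥ kacMat A *ᵥ v := by
    simp only [← sum_rowProb_smul_projStep A hrows, dotProduct_sum, dotProduct_smul, smul_eq_mul]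
  simp only [vnormSq_varStep b (hrows _), mul_add, mul_sub, sum_add_distrib, sum_sub_distrib,
    mul_left_comm _ (μ ^ 2), mul_left_comm _ (2 * μ), ← mul_sum, hcross,
    sum_rowProb_mul_vnormSq_projStep A hrows]
  nlinarith [mul_le_mul_of_nonneg_left hK (sq_nonneg μ)]

end Variance

lemma pathExpect_vnormSq_varSeq_le {n d : ℕ} [NeZero n] {A : Matrix (Fin n) (Fin d) ℝ}
    (hrows : ∀ i, A i ≠ 0) (b : Fin n → ℝ) {μ lam : ℝ} (hμ0 : 0 < μ) (hμ1 : μ < 1)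
    (hlam : lam = (1 - μ) / μ * frobSq A) {xmu : Fin d → ℝ}
    (hxmu : Aᵀ *ᵥ (b - A *ᵥ xmu) = lam • xmu) (T : ℕ) :
    pathExpect A (fun ω : Fin T → Fin n => vnormSq (varSeq A b μ xmu (extendPath ω) T))
      ≤ μ / ((1 + μ) * lam) * vnormSq (b - A *ᵥ xmu) := by
  have hF := frobSq_pos A hrows
  have hlam0 : 0 < lam := by
    have : 0 < 1 - μ := by linarith
    rw [hlam]
    positivity
  have hmean : ∀ T, pathExpect A
      (fun ω : Fin T → Fin n => pathIter (varStep A b μ xmu) 0 (extendPath ω) T) = 0 := fun T => by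
    rw [pathExpect_pathIter_eq_pow A _ 0 (μ • (kacMat A).mulVecLin)
      (fun v => sum_rowProb_smul_varStep b hrows hμ0.ne' hlam hxmu v), map_zero]
  simp only [varSeq_eq_pathIter]
  refine pathExpect_pathIter_le_of_mean_zero A _ 0 hrows vnormSq
    (c := μ ^ 2 * vnormSq (b - A *ᵥ xmu) / frobSq A)
    ((-(2 * μ)) • (dotProductBilin ℝ ℝ ((1 - μ) • xmu) ∘ₗ (kacMat A).mulVecLin)) (sq_nonneg μ)
    ?_ ?_ (fun v => ?_) hmean T
  · rw [show vnormSq (0 : Fin d → ℝ) = 0 by simp [vnormSq]]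
    exact mul_nonneg (div_nonneg hμ0.le (mul_pos (by linarith) hlam0).le) (vnormSq_nonneg _)
  · have : 1 - μ ≠ 0 := by linarith
    apply le_of_eq
    rw [hlam]
    field_simp
    ring
  · refine (sum_rowProb_mul_vnormSq_varStep_le b hrows hμ0.ne' hlam hxmu v).trans_eq ?_
    simp only [LinearMap.smul_apply, LinearMap.comp_apply, mulVecLin_apply,
      dotProductBilin_apply_apply, smul_eq_mul]
    ring

/-- RK-RR converges to the ridge solution up to a finite horizon:
E‖x_t - x_μ‖² ≤ 2[μ²(1 - κ_dem⁻²)]^t ‖x_0 - x_μ‖² + (2μ/((1+μ)λ)) ‖b - Ax_μ‖²,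
assuming x_0 ∈ range(Aᵀ). -/
theorem rkrr_horizon_bound {n d : ℕ} [NeZero n]
    (A : Matrix (Fin n) (Fin d) ℝ) (b : Fin n → ℝ) (hrows : ∀ i, A i ≠ 0)
    (Ap : Matrix (Fin d) (Fin n) ℝ) (hAp : IsMoorePenrose A Ap)
    (μ : ℝ) (hμ0 : 0 < μ) (hμ1 : μ < 1)
    (lam : ℝ) (hlam : lam = (1 - μ) / μ * frobSq A)
    (xmu : Fin d → ℝ) (hxmu : Aᵀ *ᵥ (b - A *ᵥ xmu) = lam • xmu)
    (x0 : Fin d → ℝ) (h0 : inRowSpace A x0) (t : ℕ) :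
    ∑ ω : Fin t → Fin n, pathWeight A ω * vnormSq (rrSeq A b μ x0 (extendPath ω) t - xmu)
      ≤ 2 * (μ ^ 2 * (1 - (kdem A Ap ^ 2)⁻¹)) ^ t * vnormSq (x0 - xmu)
        + 2 * μ / ((1 + μ) * lam) * vnormSq (b - A *ᵥ xmu) := by
  have hlam0 : lam ≠ 0 := by
    have : 0 < 1 - μ := by linarith
    rw [hlam]
    exact (mul_pos (div_pos this hμ0) (frobSq_pos A hrows)).ne'
  have hbias := pathExpect_vnormSq_biasSeq_le hrows hAp μ
    (inRowSpace_sub h0 (inRowSpace_of_ridge b hlam0 hxmu)) t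
  have hvar := pathExpect_vnormSq_varSeq_le hrows b hμ0 hμ1 hlam hxmu t
  calc _ = pathExpect A fun ω : Fin t → Fin n => vnormSq
          (biasSeq A μ (x0 - xmu) (extendPath ω) t + varSeq A b μ xmu (extendPath ω) t) := by
        simp only [rrSeq_sub_eq_biasSeq_add_varSeq]
        rfl
    _ ≤ pathExpect A fun ω : Fin t → Fin n =>
          2 * vnormSq (biasSeq A μ (x0 - xmu) (extendPath ω) t)
            + 2 * vnormSq (varSeq A b μ xmu (extendPath ω) t) :=
        pathExpect_mono A fun ω => vnormSq_add_le _ _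
    _ ≤ 2 * ((μ ^ 2 * (1 - (kdem A Ap ^ 2)⁻¹)) ^ t * vnormSq (x0 - xmu))
          + 2 * (μ / ((1 + μ) * lam) * vnormSq (b - A *ᵥ xmu)) := by
        rw [pathExpect_add, pathExpect_mul_left, pathExpect_mul_left]
        linarith
    _ = _ := by ring
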